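/- Let c > 2 be an integer. Define N(α, c) = (2π^c/(Γ(c/2)²ζ(c))) · ∑_{ℓ ∈ ℤ, |ℓ| ≤ αc} σ_{1−c}(|ℓ|) ∫_{|ℓ|}^{αc} (Δ² − ℓ²)^{c/2−1} dΔ, where σ_{1−c}(0) is interpreted as ζ(c−1) and σ_{1−c}(m) = ∑_{d∣m} d^{1−c} for m > 0. Then for any fixed α with 0 < α < 1/(2πe), N(α, c) → 0 as c → ∞. -/

import Mathlib

open Real Filter

/-- The Riemann zeta value `ζ(s) = ∑_{n ≥ 1} n^{-s}` as a real series. -/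
noncomputable def zetaR (s : ℝ) : ℝ := ∑' n : ℕ, ((n : ℝ) + 1) ^ (-s)

/-- The divisor sum `σ_t(m) = ∑_{d ∣ m} d^t`. -/
noncomputable def sigmaR (t : ℝ) (m : ℕ) : ℝ := ∑ d ∈ m.divisors, (d : ℝ) ^ t

/-- The expected number of non-vacuum primary states with `Δ ≤ αc` in a random
Narain CFT of central charge `c` (Siegel's density). -/
noncomputable def Ncount (α : ℝ) (c : ℕ) : ℝ :=
  (2 * π ^ c / (Real.Gamma ((c : ℝ) / 2) ^ 2 * zetaR c)) *
    ∑ ℓ ∈ Finset.Icc (-⌊α * (c : ℝ)⌋) ⌊α * (c : ℝ)⌋,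
      (if ℓ = 0 then zetaR ((c : ℝ) - 1) else sigmaR (1 - (c : ℝ)) ℓ.natAbs) *
        ∫ Δ in Set.Ioc |(ℓ : ℝ)| (α * (c : ℝ)),
          (Δ ^ 2 - (ℓ : ℝ) ^ 2) ^ ((c : ℝ) / 2 - 1)

/-!
Every divisor weight `σ_{1-c}(|ℓ|)` is at most `ζ(c-1) ≤ ζ(2)`, each of the `2⌊αc⌋ + 1` integrals
is at most `(αc)^{c-1}`, and Legendre's duplication formula gives `Γ(c/2)² ≳ 2^{-c} (c-1)!`.
Together with `c^c / c! ≤ e^c` this bounds `N(α, c)` by a constant times `c² (2πeα)^c`,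
which tends to `0` when `2πeα < 1`.
-/

open MeasureTheory
open scoped Nat

lemma summable_zetaR_terms {s : ℝ} (hs : 1 < s) :
    Summable fun n : ℕ => ((n : ℝ) + 1) ^ (-s) := by
  simpa using (summable_nat_add_iff 1).mpr (summable_nat_rpow.mpr (by linarith : -s < -1))

lemma zetaR_nonneg (s : ℝ) : 0 ≤ zetaR s :=
  tsum_nonneg fun n => by positivity

lemma one_le_zetaR {s : ℝ} (hs : 1 < s) : 1 ≤ zetaR s := by
  simpa [zetaR] using (summable_zetaR_terms hs).le_tsum 0 fun n _ => by positivity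

lemma zetaR_le_zetaR_of_le {s t : ℝ} (hs : 1 < s) (hst : s ≤ t) : zetaR t ≤ zetaR s :=
  (summable_zetaR_terms (hs.trans_le hst)).tsum_le_tsum
    (fun n => rpow_le_rpow_of_exponent_le (by linarith [n.cast_nonneg (α := ℝ)]) (neg_le_neg hst))
    (summable_zetaR_terms hs)

lemma sigmaR_le_zetaR {t : ℝ} (ht : t < -1) (m : ℕ) : sigmaR t m ≤ zetaR (-t) := by
  have hsub : m.divisors ⊆ Finset.Ico 1 (m + 1) := fun d hd =>
    Finset.mem_Ico.mpr ⟨Nat.pos_of_mem_divisors hd, Nat.lt_succ_of_le (Nat.divisor_le hd)⟩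
  calc sigmaR t m ≤ ∑ d ∈ Finset.Ico 1 (m + 1), (d : ℝ) ^ t :=
        Finset.sum_le_sum_of_subset_of_nonneg hsub fun d _ _ => by positivity
    _ = ∑ n ∈ Finset.range m, ((n : ℝ) + 1) ^ t := by
        rw [Finset.sum_Ico_eq_sum_range]; simp [add_comm]
    _ ≤ zetaR (-t) := by
        simpa [zetaR] using
          (summable_zetaR_terms (s := -t) (by linarith)).sum_le_tsum _ fun n _ => by positivity

noncomputable def shellWeight (c : ℕ) (ℓ : ℤ) : ℝ :=
  if ℓ = 0 then zetaR ((c : ℝ) - 1) else sigmaR (1 - (c : ℝ)) ℓ.natAbs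

lemma shellWeight_le_zetaR_two {c : ℕ} (hc : 3 ≤ c) (ℓ : ℤ) : shellWeight c ℓ ≤ zetaR 2 := by
  have hc' : (3 : ℝ) ≤ c := by exact_mod_cast hc
  have hζ : zetaR ((c : ℝ) - 1) ≤ zetaR 2 := zetaR_le_zetaR_of_le one_lt_two (by linarith)
  unfold shellWeight
  split_ifs
  · exact hζ
  · exact (sigmaR_le_zetaR (by linarith) _).trans (by rwa [neg_sub])

lemma shellWeight_nonneg (c : ℕ) (ℓ : ℤ) : 0 ≤ shellWeight c ℓ := by
  unfold shellWeight
  split_ifs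
  · exact zetaR_nonneg _
  · exact Finset.sum_nonneg fun d _ => by positivity

lemma sq_sub_sq_nonneg_of_abs_lt {a Δ : ℝ} (h : |a| < Δ) : 0 ≤ Δ ^ 2 - a ^ 2 :=
  sub_nonneg.mpr (sq_le_sq' (by linarith [neg_abs_le a]) (by linarith [le_abs_self a]))

lemma setIntegral_sq_sub_sq_rpow_nonneg (a x p : ℝ) :
    0 ≤ ∫ Δ in Set.Ioc |a| x, (Δ ^ 2 - a ^ 2) ^ p :=
  setIntegral_nonneg measurableSet_Ioc fun _ hΔ => rpow_nonneg (sq_sub_sq_nonneg_of_abs_lt hΔ.1) _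

lemma setIntegral_sq_sub_sq_rpow_le (a : ℝ) {x p : ℝ} (hx : 0 ≤ x) (hp : 0 ≤ p) :
    ∫ Δ in Set.Ioc |a| x, (Δ ^ 2 - a ^ 2) ^ p ≤ (x ^ 2) ^ p * x := by
  have hbound : ∀ Δ ∈ Set.Ioc |a| x, ‖(Δ ^ 2 - a ^ 2) ^ p‖ ≤ (x ^ 2) ^ p := by
    rintro Δ ⟨haΔ, hΔx⟩
    have hnonneg := sq_sub_sq_nonneg_of_abs_lt haΔ
    rw [Real.norm_of_nonneg (rpow_nonneg hnonneg _)]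
    have hΔ : 0 ≤ Δ := (abs_nonneg a).trans haΔ.le
    exact rpow_le_rpow hnonneg (by nlinarith [sq_nonneg a]) hp
  calc _ ≤ ‖∫ Δ in Set.Ioc |a| x, (Δ ^ 2 - a ^ 2) ^ p‖ := le_norm_self _
    _ ≤ (x ^ 2) ^ p * volume.real (Set.Ioc |a| x) :=
        norm_setIntegral_le_of_norm_le_const measure_Ioc_lt_top hbound
    _ ≤ (x ^ 2) ^ p * x := by
        gcongr
        rw [volume_real_Ioc]
        exact max_le (by linarith [abs_nonneg a]) hx

lemma Gamma_two_mul_le {s : ℝ} (hs : 3 / 2 ≤ s) :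
    2 * √π * Gamma (2 * s) ≤ 2 ^ (2 * s) * s * Gamma s ^ 2 := by
  have hs0 : 0 < s := by linarith
  have hhalf : Gamma (s + 1 / 2) ≤ s * Gamma s := by
    rw [← Gamma_add_one hs0.ne']
    exact Gamma_strictMonoOn_Ici.monotoneOn (by simp; linarith) (by simp; linarith) (by linarith)
  have hdup : Gamma (2 * s) * 2 ^ (1 - 2 * s) * √π ≤ s * Gamma s ^ 2 := by
    rw [← Gamma_mul_Gamma_add_half, sq, mul_left_comm]
    exact mul_le_mul_of_nonneg_left hhalf (Gamma_pos_of_pos hs0).le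
  have h2 : (2 : ℝ) ^ (2 * s) * 2 ^ (1 - 2 * s) = 2 := by
    rw [← rpow_add two_pos]; norm_num
  calc 2 * √π * Gamma (2 * s) = 2 ^ (2 * s) * (Gamma (2 * s) * 2 ^ (1 - 2 * s) * √π) := by
        linear_combination (√π * Gamma (2 * s)) * h2.symm
    _ ≤ 2 ^ (2 * s) * (s * Gamma s ^ 2) := by gcongr
    _ = 2 ^ (2 * s) * s * Gamma s ^ 2 := by ring

lemma factorial_le_Gamma_half_sq {c : ℕ} (hc : 3 ≤ c) :
    4 * √π * c ! ≤ 2 ^ c * c ^ 2 * Gamma (c / 2) ^ 2 := by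
  have hc' : (3 : ℝ) ≤ c := by exact_mod_cast hc
  have h := Gamma_two_mul_le (s := c / 2) (by linarith)
  rw [mul_div_cancel₀ _ two_ne_zero, rpow_natCast] at h
  have hfact : (c ! : ℝ) = c * Gamma c := by
    rw [← Gamma_add_one (by positivity), Gamma_nat_eq_factorial]
  calc 4 * √π * c ! = 2 * c * (2 * √π * Gamma c) := by rw [hfact]; ring
    _ ≤ 2 * c * (2 ^ c * (c / 2) * Gamma (c / 2) ^ 2) := by gcongr
    _ = 2 ^ c * c ^ 2 * Gamma (c / 2) ^ 2 := by ring

lemma Ncount_prefactor_le {c : ℕ} (hc : 3 ≤ c) :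
    2 * π ^ c / (Gamma (c / 2) ^ 2 * zetaR c) ≤ (2 * π) ^ c * c ^ 2 / (2 * √π * c !) := by
  have hc' : (3 : ℝ) ≤ c := by exact_mod_cast hc
  have hΓ : 0 < Gamma (c / 2) ^ 2 := pow_pos (Gamma_pos_of_pos (by positivity)) 2
  calc 2 * π ^ c / (Gamma (c / 2) ^ 2 * zetaR c) ≤ 2 * π ^ c / Gamma (c / 2) ^ 2 :=
        div_le_div_of_nonneg_left (by positivity) hΓ
          (le_mul_of_one_le_right hΓ.le (one_le_zetaR (by linarith)))
    _ ≤ 2 * π ^ c / (4 * √π * c ! / (2 ^ c * c ^ 2)) :=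
        div_le_div_of_nonneg_left (by positivity) (by positivity)
          ((div_le_iff₀ (by positivity)).mpr (by linarith [factorial_le_Gamma_half_sq hc]))
    _ = (2 * π) ^ c * c ^ 2 / (2 * √π * c !) := by
        field_simp
        ring

noncomputable def shellSum (α : ℝ) (c : ℕ) : ℝ :=
  ∑ ℓ ∈ Finset.Icc (-⌊α * (c : ℝ)⌋) ⌊α * (c : ℝ)⌋,
    shellWeight c ℓ * ∫ Δ in Set.Ioc |(ℓ : ℝ)| (α * (c : ℝ)), (Δ ^ 2 - (ℓ : ℝ) ^ 2) ^ ((c : ℝ) / 2 - 1)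

lemma Ncount_eq_mul_shellSum (α : ℝ) (c : ℕ) :
    Ncount α c = 2 * π ^ c / (Gamma (c / 2) ^ 2 * zetaR c) * shellSum α c :=
  rfl

lemma shellSum_nonneg (α : ℝ) (c : ℕ) : 0 ≤ shellSum α c :=
  Finset.sum_nonneg fun ℓ _ =>
    mul_nonneg (shellWeight_nonneg c ℓ) (setIntegral_sq_sub_sq_rpow_nonneg _ _ _)

lemma card_Icc_neg_floor_le {x : ℝ} (hx : 0 ≤ x) :
    ((Finset.Icc (-⌊x⌋) ⌊x⌋).card : ℝ) ≤ 2 * x + 1 := by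
  have hL : 0 ≤ ⌊x⌋ := Int.floor_nonneg.mpr hx
  have hcast : ((2 * ⌊x⌋ + 1).toNat : ℝ) = 2 * ⌊x⌋ + 1 := by
    exact_mod_cast Int.toNat_of_nonneg (by omega)
  rw [Int.card_Icc, show ⌊x⌋ + 1 - -⌊x⌋ = 2 * ⌊x⌋ + 1 by ring, hcast]
  linarith [Int.floor_le x]

lemma shellSum_le {α : ℝ} (hα : 0 < α) {c : ℕ} (hc : 3 ≤ c) :
    shellSum α c ≤ (2 * α * c + 1) * zetaR 2 * ((α * c) ^ c / (α * c)) := by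
  have hc' : (3 : ℝ) ≤ c := by exact_mod_cast hc
  have hx : 0 < α * c := by positivity
  have hpow : ((α * c) ^ 2) ^ ((c : ℝ) / 2 - 1) * (α * c) = (α * c) ^ c / (α * c) := by
    rw [← rpow_natCast, ← rpow_mul hx.le,
      show ((2 : ℕ) : ℝ) * ((c : ℝ) / 2 - 1) = c - 1 - 1 by push_cast; ring,
      rpow_sub_one hx.ne', rpow_sub_one hx.ne', rpow_natCast]
    field_simp
  have hterm : ∀ ℓ ∈ Finset.Icc (-⌊α * (c : ℝ)⌋) ⌊α * (c : ℝ)⌋,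
      shellWeight c ℓ *
        (∫ Δ in Set.Ioc |(ℓ : ℝ)| (α * (c : ℝ)), (Δ ^ 2 - (ℓ : ℝ) ^ 2) ^ ((c : ℝ) / 2 - 1)) ≤
      zetaR 2 * ((α * c) ^ c / (α * c)) := fun ℓ _ => by
    rw [← hpow]
    exact mul_le_mul (shellWeight_le_zetaR_two hc ℓ)
      (setIntegral_sq_sub_sq_rpow_le _ hx.le (by linarith))
      (setIntegral_sq_sub_sq_rpow_nonneg _ _ _) (zetaR_nonneg 2)
  calc shellSum α c ≤ (Finset.Icc (-⌊α * (c : ℝ)⌋) ⌊α * (c : ℝ)⌋).card •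
        (zetaR 2 * ((α * c) ^ c / (α * c))) := Finset.sum_le_card_nsmul _ _ _ hterm
    _ ≤ (2 * α * c + 1) * zetaR 2 * ((α * c) ^ c / (α * c)) := by
        rw [nsmul_eq_mul, mul_assoc]
        gcongr
        · exact mul_nonneg (zetaR_nonneg 2) (by positivity)
        · simpa [mul_assoc] using card_Icc_neg_floor_le hx.le

lemma Ncount_nonneg (α : ℝ) (c : ℕ) : 0 ≤ Ncount α c := by
  rw [Ncount_eq_mul_shellSum]
  have hζ := zetaR_nonneg c
  exact mul_nonneg (by positivity) (shellSum_nonneg α c)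

lemma Ncount_le {α : ℝ} (hα : 0 < α) {c : ℕ} (hc : 3 ≤ c) :
    Ncount α c ≤ zetaR 2 * (2 * α + 1) / (2 * √π * α) * (c ^ 2 * (2 * π * exp 1 * α) ^ c) := by
  have hc' : (3 : ℝ) ≤ c := by exact_mod_cast hc
  have hζ := zetaR_nonneg 2
  have hstirling : (c : ℝ) ^ c / c ! ≤ exp 1 ^ c := by
    rw [← exp_nat_mul, mul_one]; exact pow_div_factorial_le_exp _ (by positivity) c
  rw [Ncount_eq_mul_shellSum]
  calc _ ≤ (2 * π) ^ c * c ^ 2 / (2 * √π * c !) *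
        ((2 * α * c + 1) * zetaR 2 * ((α * c) ^ c / (α * c))) :=
        mul_le_mul (Ncount_prefactor_le hc) (shellSum_le hα hc) (shellSum_nonneg α c)
          (by positivity)
    _ = zetaR 2 * (2 * α * c + 1) * c / (2 * √π * α) * ((2 * π * α) ^ c * (c ^ c / c !)) := by
        field_simp
        ring
    _ ≤ zetaR 2 * ((2 * α + 1) * c) * c / (2 * √π * α) * ((2 * π * α) ^ c * exp 1 ^ c) := by
        gcongr
        nlinarith
    _ = zetaR 2 * (2 * α + 1) / (2 * √π * α) * (c ^ 2 * (2 * π * exp 1 * α) ^ c) := by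
        ring

theorem stmt18 (α : ℝ) (h0 : 0 < α) (hα : α < 1 / (2 * π * Real.exp 1)) :
    Tendsto (fun c : ℕ => Ncount α c) atTop (nhds 0) := by
  have hβ : 2 * π * exp 1 * α < 1 := by
    rwa [lt_div_iff₀' (by positivity)] at hα
  have hbound := (tendsto_pow_const_mul_const_pow_of_lt_one 2 (by positivity) hβ).const_mul
    (zetaR 2 * (2 * α + 1) / (2 * √π * α))
  rw [mul_zero] at hbound
  refine tendsto_of_tendsto_of_tendsto_of_le_of_le' tendsto_const_nhds hbound
    (Eventually.of_forall (Ncount_nonneg α)) ?_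
  filter_upwards [eventually_ge_atTop 3] with c hc using Ncount_le h0 hc
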